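/- Let D = ∂₂∂₁ be a second-order constant-coefficient differential operator with ∂₁,∂₂ ∈ {∂ₓ,∂_y}, let f = g·χ_Ω with g smooth and Dg = 0 on Ω, and let μ be a trigonometric polynomial vanishing on ∂Ω. Then μ²·Df = 0 as distributions, so the Fourier coefficients d[k] of μ² annihilate (Df)^: Σ_{k∈Γ} d[k](Df)^(ω−2πk) = 0 for all ω ∈ ℝ². -/

import Mathlib

open MeasureTheory Topology Filter

/-- A trigonometric polynomial, represented by its finitely supported Fourier
coefficients `c : ℤ² →₀ ℂ`; multiplication is convolution of coefficients. -/
noncomputable def trigEval (μ : AddMonoidAlgebra ℂ (ℤ × ℤ)) (r : ℝ × ℝ) : ℂ :=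
  ∑ k ∈ μ.coeff.support, μ.coeff k * Complex.exp (2 * Real.pi * Complex.I * (k.1 * r.1 + k.2 * r.2))

/-- The degree `(K, L)` of a trigonometric polynomial: the dimensions of the smallest
rectangle containing the frequency support. -/
noncomputable def tdeg (μ : AddMonoidAlgebra ℂ (ℤ × ℤ)) : ℤ × ℤ :=
  (((μ.coeff.support.image Prod.fst).max.unbotD 0) - ((μ.coeff.support.image Prod.fst).min.untopD 0) + 1,
   ((μ.coeff.support.image Prod.snd).max.unbotD 0) - ((μ.coeff.support.image Prod.snd).min.untopD 0) + 1)

/-- The zero set of a trigonometric polynomial within the unit square `[0,1]²`. -/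
def zeroSet (μ : AddMonoidAlgebra ℂ (ℤ × ℤ)) : Set (ℝ × ℝ) :=
  {r | r ∈ Set.Icc ((0:ℝ), (0:ℝ)) (1, 1) ∧ trigEval μ r = 0}

/-- A simply connected region `Ω ⊆ [0,1]²` whose boundary `∂Ω = frontier Ω` is a
piecewise smooth (piecewise C¹) simple closed curve. -/
def IsPSRegion (Ω : Set (ℝ × ℝ)) : Prop :=
  IsOpen Ω ∧ Ω ⊆ Set.Icc ((0:ℝ), (0:ℝ)) (1, 1) ∧ SimplyConnectedSpace ↥Ω ∧
  ∃ γ : ℝ → ℝ × ℝ, ContinuousOn γ (Set.Icc 0 1) ∧ γ 0 = γ 1 ∧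
    Set.InjOn γ (Set.Ico 0 1) ∧ frontier Ω = γ '' Set.Icc 0 1 ∧
    ∃ S : Finset ℝ, ∀ t ∈ Set.Icc (0:ℝ) 1 \ (S : Set ℝ), DifferentiableAt ℝ γ t

/-- The (distributional) Fourier transform of `Df`, where `f = g·χ_Ω` and `D = ∂₂∂₁`
with directions `e₁, e₂ ∈ {(1,0),(0,1)}`:
`(Df)^(ω) = (-i⟨ω,e₁⟩)(-i⟨ω,e₂⟩) ∫_Ω g(r) e^{-i⟨ω,r⟩} dr`. -/
noncomputable def hatD2f (e₁ e₂ : ℝ × ℝ) (g : ℝ × ℝ → ℂ) (Ω : Set (ℝ × ℝ))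
    (ω : ℝ × ℝ) : ℂ :=
  (-Complex.I * (ω.1 * e₁.1 + ω.2 * e₁.2)) * (-Complex.I * (ω.1 * e₂.1 + ω.2 * e₂.2)) *
    ∫ r in Ω, g r * Complex.exp (-Complex.I * (ω.1 * r.1 + ω.2 * r.2))

noncomputable def chr (r : ℝ × ℝ) : Multiplicative (ℤ × ℤ) →* ℂ where
  toFun k := Complex.exp (2 * Real.pi * Complex.I *
    ((k.toAdd.1 : ℂ) * r.1 + (k.toAdd.2 : ℂ) * r.2))
  map_one' := by
    simp
  map_mul' a b := by
    show Complex.exp _ = _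
    rw [← Complex.exp_add]
    congr 1
    show (2:ℂ) * Real.pi * Complex.I * ((((a.toAdd.1 + b.toAdd.1 : ℤ)):ℂ) * r.1 + ((a.toAdd.2 + b.toAdd.2 : ℤ):ℂ) * r.2) = _
    push_cast
    ring

lemma trigEval_eq_lift (μ : AddMonoidAlgebra ℂ (ℤ × ℤ)) (r : ℝ × ℝ) :
    trigEval μ r = AddMonoidAlgebra.lift ℂ ℂ (ℤ × ℤ) (chr r) μ := by
  rw [AddMonoidAlgebra.lift_apply]
  rfl

lemma trigEval_sq (μ : AddMonoidAlgebra ℂ (ℤ × ℤ)) (r : ℝ × ℝ) :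
    trigEval (μ ^ 2) r = trigEval μ r ^ 2 := by
  rw [trigEval_eq_lift, trigEval_eq_lift, map_pow]

noncomputable def expLin (a b : ℂ) (r : ℝ × ℝ) : ℂ := Complex.exp (a * r.1 + b * r.2)

noncomputable def linCLM (a b : ℂ) : (ℝ × ℝ) →L[ℝ] ℂ :=
  a • (Complex.ofRealCLM.comp (ContinuousLinearMap.fst ℝ ℝ ℝ)) +
  b • (Complex.ofRealCLM.comp (ContinuousLinearMap.snd ℝ ℝ ℝ))

lemma linCLM_apply (a b : ℂ) (r : ℝ × ℝ) : linCLM a b r = a * r.1 + b * r.2 := by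
  simp [linCLM, smul_eq_mul]

lemma hasFDerivAt_expLin (a b : ℂ) (r : ℝ × ℝ) :
    HasFDerivAt (expLin a b) (expLin a b r • linCLM a b) r := by
  have h1 : HasFDerivAt (fun r : ℝ × ℝ => a * (r.1:ℂ) + b * r.2) (linCLM a b) r := by
    have := (linCLM a b).hasFDerivAt (x := r)
    apply this.congr_fderiv rfl |>.congr_of_eventuallyEq
    · filter_upwards with s using (linCLM_apply a b s)
  exact h1.cexp

lemma contDiff_expLin (a b : ℂ) : ContDiff ℝ (⊤ : ℕ∞) (expLin a b) := by
  have h1 : ContDiff ℝ (⊤ : ℕ∞) (fun r : ℝ × ℝ => a * (r.1:ℂ) + b * r.2) :=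
    (contDiff_const.mul (Complex.ofRealCLM.contDiff.comp contDiff_fst)).add
      (contDiff_const.mul (Complex.ofRealCLM.contDiff.comp contDiff_snd))
  exact Complex.contDiff_exp.comp h1

lemma fderiv_expLin_apply (a b : ℂ) (r e : ℝ × ℝ) :
    fderiv ℝ (expLin a b) r e = (a * e.1 + b * e.2) * expLin a b r := by
  rw [(hasFDerivAt_expLin a b r).fderiv]
  simp [linCLM_apply, smul_eq_mul]; ring_nf

lemma trigEval_eq (μ : AddMonoidAlgebra ℂ (ℤ × ℤ)) :
    trigEval μ = fun r => ∑ k ∈ μ.coeff.support, μ.coeff k *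
      expLin (2 * Real.pi * Complex.I * k.1) (2 * Real.pi * Complex.I * k.2) r := by
  funext r
  refine Finset.sum_congr rfl fun k _ => ?_
  unfold expLin
  congr 1
  ring

lemma contDiff_trigEval (μ : AddMonoidAlgebra ℂ (ℤ × ℤ)) : ContDiff ℝ (⊤ : ℕ∞) (trigEval μ) := by
  rw [trigEval_eq]
  exact ContDiff.sum fun k _ => contDiff_const.mul (contDiff_expLin _ _)

noncomputable def exp1 (j : ℤ) (y : ℝ) : ℂ := Complex.exp (2 * Real.pi * Complex.I * j * y)

lemma continuous_exp1 (j : ℤ) : Continuous (exp1 j) := by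
  unfold exp1
  fun_prop

lemma integral_exp1 (j : ℤ) :
    ∫ y in (0:ℝ)..1, exp1 j y = if j = 0 then 1 else 0 := by
  unfold exp1
  split_ifs with h
  · simp [h]
  · have hc : (2 * Real.pi * Complex.I * j : ℂ) ≠ 0 := by
      simp [Real.pi_ne_zero, Complex.I_ne_zero, h]
    rw [show (fun y : ℝ => Complex.exp (2 * Real.pi * Complex.I * j * y)) =
        (fun y : ℝ => Complex.exp (2 * Real.pi * Complex.I * j * y)) from rfl]
    rw [integral_exp_mul_complex hc]
    have h1 : (2 * Real.pi * Complex.I * j * (1:ℝ) : ℂ) = j * (2 * Real.pi * Complex.I) := by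
      push_cast; ring
    have h0 : (2 * Real.pi * Complex.I * j * (0:ℝ) : ℂ) = 0 := by push_cast; ring
    rw [h1, h0, Complex.exp_int_mul_two_pi_mul_I, Complex.exp_zero, sub_self, zero_div]

lemma exp1_mul (j m : ℤ) (y : ℝ) : exp1 j y * exp1 m y = exp1 (j + m) y := by
  unfold exp1
  rw [← Complex.exp_add]
  congr 1
  push_cast
  ring

lemma analyticAt_exp1 (j : ℤ) (y : ℝ) : AnalyticAt ℝ (exp1 j) y := by
  have h1 : AnalyticAt ℝ (fun y : ℝ => 2 * Real.pi * Complex.I * j * (y:ℂ)) y :=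
    analyticAt_const.mul (Complex.ofRealCLM.analyticAt y)
  exact (analyticAt_cexp.restrictScalars).comp h1

/-- A nontrivial 1D trigonometric polynomial has countable zero set. -/
lemma countable_zeros_1d (t : Finset ℤ) (c : ℤ → ℂ) (m : ℤ) (hm : m ∈ t) (hc : c m ≠ 0) :
    {y : ℝ | ∑ j ∈ t, c j * exp1 j y = 0}.Countable := by
  set F : ℝ → ℂ := fun y => ∑ j ∈ t, c j * exp1 j y with hF
  have hFan : AnalyticOnNhd ℝ F Set.univ := fun y _ =>
    Finset.analyticAt_fun_sum t (fun j _ => analyticAt_const.mul (analyticAt_exp1 j y))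
  -- F is not identically zero
  have hFne : ¬ ∀ y : ℝ, F y = 0 := by
    intro hzero
    apply hc
    have key : ∫ y in (0:ℝ)..1, F y * exp1 (-m) y = c m := by
      rw [hF]
      simp only [Finset.sum_mul]
      rw [intervalIntegral.integral_finset_sum (fun j _ => by
        exact ((continuous_const.mul (continuous_exp1 j)).mul (continuous_exp1 (-m))).intervalIntegrable _ _)]
      rw [Finset.sum_eq_single_of_mem m hm]
      · simp only [mul_assoc, exp1_mul, add_neg_cancel]
        rw [intervalIntegral.integral_const_mul, integral_exp1]
        simp
      · intro j _ hj
        simp only [mul_assoc, exp1_mul]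
        rw [intervalIntegral.integral_const_mul, integral_exp1]
        have : ¬ (j + -m = 0) := by omega
        simp [this]
    rw [← key]
    simp only [hzero, zero_mul, intervalIntegral.integral_zero]
  -- zeros are isolated
  set Z := {y : ℝ | F y = 0} with hZ
  have hdisc : ∀ y ∈ Z, 𝓝[≠] y ⊓ Filter.principal Z = ⊥ := by
    intro y hy
    rcases (hFan y (Set.mem_univ y)).eventually_eq_zero_or_eventually_ne_zero with h | h
    · exfalso
      apply hFne
      have := hFan.eqOn_zero_of_preconnected_of_eventuallyEq_zero
        isPreconnected_univ (Set.mem_univ y) h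
      intro z; exact this (Set.mem_univ z)
    · have h1 : (Z \ {y})ᶜ ∈ 𝓝[≠] y := by
        filter_upwards [h] with z hz
        simp only [Set.mem_compl_iff, Set.mem_diff, hZ, Set.mem_setOf_eq, not_and]
        intro hzZ
        exact absurd hzZ hz
      have h5 : (Z \ {y})ᶜ ∩ ({y}ᶜ ∩ Z) = ∅ := by
        ext z
        simp only [Set.mem_inter_iff, Set.mem_compl_iff, Set.mem_diff, Set.mem_singleton_iff,
          Set.mem_empty_iff_false, iff_false, not_and]
        tauto
      rw [← Filter.empty_mem_iff_bot, ← h5]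
      exact Filter.inter_mem (Filter.mem_inf_of_left h1)
        (Filter.inter_mem (Filter.mem_inf_of_left self_mem_nhdsWithin)
          (Filter.mem_inf_of_right (Filter.mem_principal_self Z)))
  haveI : DiscreteTopology ↥Z := discreteTopology_subtype_iff.mpr hdisc
  haveI cnt : Countable ↥Z := TopologicalSpace.separableSpace_iff_countable.mp inferInstance
  exact Set.countable_coe_iff.mp cnt

lemma trigEval_sep (μ : AddMonoidAlgebra ℂ (ℤ × ℤ)) (x y : ℝ) :
    trigEval μ (x, y) = ∑ k ∈ μ.coeff.support, μ.coeff k * (exp1 k.1 x * exp1 k.2 y) := by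
  unfold trigEval exp1
  refine Finset.sum_congr rfl fun k _ => ?_
  rw [← Complex.exp_add]
  congr 1
  push_cast
  ring

lemma null_zero_set (μ : AddMonoidAlgebra ℂ (ℤ × ℤ)) (hμ : μ ≠ 0) :
    volume {r : ℝ × ℝ | trigEval μ r = 0} = 0 := by
  obtain ⟨k₀, hk₀⟩ := (Finsupp.support_nonempty_iff (f := μ.coeff)).mpr (by simpa using hμ)
  have hk₀ne : μ.coeff k₀ ≠ 0 := Finsupp.mem_support_iff.mp hk₀
  set Z := {r : ℝ × ℝ | trigEval μ r = 0} with hZdef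
  have hZmeas : MeasurableSet Z := by
    have : IsClosed Z := isClosed_eq (contDiff_trigEval μ).continuous continuous_const
    exact this.measurableSet
  set s2 := μ.coeff.support.image Prod.snd with hs2
  set d : ℝ → ℤ → ℂ := fun x j =>
    ∑ k ∈ μ.coeff.support.filter (fun k => k.2 = j), μ.coeff k * exp1 k.1 x with hd
  have hslice : ∀ x y : ℝ, trigEval μ (x, y) = ∑ j ∈ s2, d x j * exp1 j y := by
    intro x y
    rw [trigEval_sep]
    rw [← Finset.sum_fiberwise_of_maps_to (g := Prod.snd) (t := s2)
      (fun k hk => Finset.mem_image_of_mem _ hk) (fun k => μ.coeff k * (exp1 k.1 x * exp1 k.2 y))]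
    refine Finset.sum_congr rfl fun j _ => ?_
    rw [hd]
    simp only [Finset.sum_mul]
    refine Finset.sum_congr rfl fun k hk => ?_
    have : k.2 = j := (Finset.mem_filter.mp hk).2
    rw [this]
    ring
  -- the bad set of x's is countable
  have hB : {x : ℝ | d x k₀.2 = 0}.Countable := by
    have hrw : ∀ x : ℝ, d x k₀.2 =
        ∑ i ∈ (μ.coeff.support.filter (fun k => k.2 = k₀.2)).image Prod.fst,
          μ.coeff (i, k₀.2) * exp1 i x := by
      intro x
      rw [Finset.sum_image (fun a ha b hb hab => by
        have ha2 : a.2 = k₀.2 := (Finset.mem_filter.mp ha).2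
        have hb2 : b.2 = k₀.2 := (Finset.mem_filter.mp hb).2
        exact Prod.ext hab (ha2.trans hb2.symm))]
      rw [hd]
      refine Finset.sum_congr rfl fun k hk => ?_
      have : k.2 = k₀.2 := (Finset.mem_filter.mp hk).2
      rw [show (k.1, k₀.2) = k from by rw [← this]]
    have hmem : k₀.1 ∈ (μ.coeff.support.filter (fun k => k.2 = k₀.2)).image Prod.fst :=
      Finset.mem_image_of_mem _ (Finset.mem_filter.mpr ⟨hk₀, rfl⟩)
    have := countable_zeros_1d ((μ.coeff.support.filter (fun k => k.2 = k₀.2)).image Prod.fst)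
      (fun i => μ.coeff (i, k₀.2)) k₀.1 hmem (by simpa using hk₀ne)
    refine Set.Countable.mono ?_ this
    intro x hx
    simp only [Set.mem_setOf_eq] at hx ⊢
    rw [← hrw x]
    exact hx
  -- conclude with Fubini
  have key : ∀ᵐ x : ℝ, volume (Prod.mk x ⁻¹' Z) = 0 := by
    have hBnull : volume {x : ℝ | d x k₀.2 = 0} = 0 := hB.measure_zero _
    have h1 : ∀ᵐ x : ℝ, d x k₀.2 ≠ 0 := by
      rw [MeasureTheory.ae_iff]
      simpa using hBnull
    filter_upwards [h1] with x hx
    have hset : Prod.mk x ⁻¹' Z = {y | ∑ j ∈ s2, d x j * exp1 j y = 0} := by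
      ext y
      simp only [hZdef, Set.mem_preimage, Set.mem_setOf_eq, hslice x y]
    rw [hset]
    exact (countable_zeros_1d s2 (d x) k₀.2 (Finset.mem_image_of_mem _ hk₀) hx).measure_zero _
  rw [show (volume : Measure (ℝ × ℝ)) = (volume : Measure ℝ).prod volume from
    Measure.volume_eq_prod ℝ ℝ, MeasureTheory.Measure.measure_prod_null hZmeas]
  filter_upwards [key] with x hx
  exact hx

lemma norm_le_one_of_mem_Icc {r : ℝ × ℝ} (h : r ∈ Set.Icc ((0:ℝ),(0:ℝ)) ((1:ℝ),(1:ℝ))) :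
    ‖r‖ ≤ 1 := by
  obtain ⟨⟨h1, h2⟩, h3, h4⟩ := h
  rw [Prod.norm_def]
  simp only [Real.norm_eq_abs, sup_le_iff]
  norm_num at h1 h2 h3 h4
  constructor <;> rw [abs_le] <;> constructor <;> linarith

/-- Key divergence lemma: if `u` is smooth and vanishes on the (null) frontier of a
bounded open set `Ω`, then the integral over `Ω` of any directional derivative of `u`
vanishes. -/
lemma key_div (Ω : Set (ℝ × ℝ)) (hopen : IsOpen Ω)
    (hbd : Ω ⊆ Set.Icc ((0:ℝ),(0:ℝ)) ((1:ℝ),(1:ℝ)))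
    (hnull : volume (frontier Ω) = 0) (u : ℝ × ℝ → ℂ) (hu : ContDiff ℝ (⊤ : ℕ∞) u)
    (hvan : ∀ r ∈ frontier Ω, u r = 0) (e : ℝ × ℝ) :
    ∫ r in Ω, fderiv ℝ u r e = 0 := by
  have hmeas : MeasurableSet Ω := hopen.measurableSet
  have hclΩ : closure Ω ⊆ Set.Icc ((0:ℝ),(0:ℝ)) ((1:ℝ),(1:ℝ)) :=
    closure_minimal hbd isClosed_Icc
  set E : ℝ × ℝ → ℂ := Ω.indicator u with hE
  set R : ℝ := 3 + ‖e‖ with hR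
  set K : Set (ℝ × ℝ) := Metric.closedBall 0 (R + ‖e‖) with hK
  have hKconv : Convex ℝ K := convex_closedBall _ _
  have hsub : ∀ r : ℝ × ℝ, r ∈ closure Ω → r ∈ K := by
    intro r hr
    have := norm_le_one_of_mem_Icc (hclΩ hr)
    simp only [hK, Metric.mem_closedBall, dist_zero_right]
    have : (0:ℝ) ≤ ‖e‖ := norm_nonneg e
    nlinarith [norm_le_one_of_mem_Icc (hclΩ hr)]
  -- bound on the derivative over K
  obtain ⟨C₀, hC₀⟩ := (isCompact_closedBall (0 : ℝ × ℝ) (R + ‖e‖)).exists_bound_of_continuousOn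
    ((hu.continuous_fderiv (by simp)).continuousOn)
  set C : ℝ := max C₀ 0 with hC
  have hCnn : (0:ℝ) ≤ C := le_max_right _ _
  have hCb : ∀ x ∈ K, ‖fderiv ℝ u x‖ ≤ C := fun x hx => (hC₀ x hx).trans (le_max_left _ _)
  have hMVT : ∀ x ∈ K, ∀ z ∈ K, ‖u x - u z‖ ≤ C * ‖x - z‖ := by
    intro x hx z hz
    exact hKconv.norm_image_sub_le_of_norm_fderiv_le
      (fun y _ => (hu.differentiable (by simp)).differentiableAt) hCb hz hx
  -- Lipschitz property of the extension E on K
  have hlip : ∀ x ∈ K, ∀ y ∈ K, ‖E x - E y‖ ≤ (2 * C) * ‖x - y‖ := by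
    have single : ∀ x ∈ K, ∀ y ∈ K, (segment ℝ x y ∩ frontier Ω).Nonempty →
        ‖E x‖ ≤ C * ‖x - y‖ := by
      intro x hx y hy ⟨z, hzseg, hzf⟩
      by_cases hxΩ : x ∈ Ω
      · have hEx : E x = u x := Set.indicator_of_mem hxΩ u
        have huz : u z = 0 := hvan z hzf
        have hzK : z ∈ K := hKconv.segment_subset hx hy hzseg
        have hxz : ‖x - z‖ ≤ ‖x - y‖ := by
          obtain ⟨a, b, ha, hb, hab, rfl⟩ := hzseg
          have : x - (a • x + b • y) = b • (x - y) := by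
            rw [show a = 1 - b by linarith]
            module
          rw [this, norm_smul]
          simp only [Real.norm_eq_abs, abs_of_nonneg hb]
          nlinarith [norm_nonneg (x - y)]
        calc ‖E x‖ = ‖u x - u z‖ := by rw [hEx, huz, sub_zero]
          _ ≤ C * ‖x - z‖ := hMVT x hx z hzK
          _ ≤ C * ‖x - y‖ := by nlinarith
      · simp [hE, Set.indicator_of_notMem hxΩ, norm_nonneg, mul_nonneg hCnn (norm_nonneg _)]
    intro x hx y hy
    by_cases hseg : (segment ℝ x y ∩ frontier Ω).Nonempty
    · have h1 := single x hx y hy hseg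
      have h2 := single y hy x hx (by
        obtain ⟨z, hz1, hz2⟩ := hseg
        exact ⟨z, segment_symm ℝ x y ▸ hz1, hz2⟩)
      have h3 : ‖y - x‖ = ‖x - y‖ := norm_sub_rev y x
      calc ‖E x - E y‖ ≤ ‖E x‖ + ‖E y‖ := norm_sub_le _ _
        _ ≤ C * ‖x - y‖ + C * ‖x - y‖ := by rw [h3] at h2; exact add_le_add h1 h2
        _ = (2 * C) * ‖x - y‖ := by ring
    · -- segment misses the frontier: it lies in Ω or in the exterior
      have hcover : segment ℝ x y ⊆ Ω ∪ (closure Ω)ᶜ := by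
        intro z hz
        by_cases h1 : z ∈ closure Ω
        · left
          rcases h1.out with _
          have : z ∉ frontier Ω := fun hf => hseg ⟨z, hz, hf⟩
          have : z ∈ interior Ω := by
            rw [frontier, Set.mem_diff] at this
            push_neg at this
            exact this h1
          rwa [hopen.interior_eq] at this
        · right; exact h1
      have := (convex_segment x y).isPreconnected
      rcases this.subset_or_subset hopen (isClosed_closure.isOpen_compl)
        (by
          rw [Set.disjoint_iff]
          intro z hz
          exact hz.2 (subset_closure hz.1)) hcover with hin | hout
      · have hxΩ : x ∈ Ω := hin (left_mem_segment ℝ x y)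
        have hyΩ : y ∈ Ω := hin (right_mem_segment ℝ x y)
        rw [hE, Set.indicator_of_mem hxΩ, Set.indicator_of_mem hyΩ]
        calc ‖u x - u y‖ ≤ C * ‖x - y‖ := hMVT x hx y hy
          _ ≤ (2 * C) * ‖x - y‖ := by nlinarith [norm_nonneg (x - y), hCnn]
      · have hxΩ : x ∉ Ω := fun h => (hout (left_mem_segment ℝ x y)) (subset_closure h)
        have hyΩ : y ∉ Ω := fun h => (hout (right_mem_segment ℝ x y)) (subset_closure h)
        rw [hE, Set.indicator_of_notMem hxΩ, Set.indicator_of_notMem hyΩ]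
        simp only [sub_self, norm_zero]
        positivity
  -- integrability of E
  have hIntu : IntegrableOn u Ω := by
    have : IntegrableOn u (Set.Icc ((0:ℝ),(0:ℝ)) ((1:ℝ),(1:ℝ))) :=
      hu.continuous.continuousOn.integrableOn_compact isCompact_Icc
    exact this.mono_set hbd
  have hIntE : Integrable E := (integrable_indicator_iff hmeas).mpr hIntu
  have hEsm : StronglyMeasurable E :=
    hu.continuous.stronglyMeasurable.indicator hmeas
  -- the difference quotients
  set F : ℕ → (ℝ × ℝ) → ℂ := fun n x => (n : ℝ) • (E (x + ((n:ℝ))⁻¹ • e) - E x) with hF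
  have hFint : ∀ n : ℕ, Integrable (F n) := by
    intro n
    exact ((hIntE.comp_add_right (((n:ℝ))⁻¹ • e)).sub hIntE).smul ((n:ℝ))
  have hFzero : ∀ n : ℕ, ∫ x, F n x = 0 := by
    intro n
    rw [hF]
    simp only
    rw [integral_smul, integral_sub (hIntE.comp_add_right _) hIntE,
      integral_add_right_eq_self E (((n:ℝ))⁻¹ • e), sub_self, smul_zero]
  -- the limit function
  set f : ℝ × ℝ → ℂ := Ω.indicator (fun r => fderiv ℝ u r e) with hf
  -- domination
  set B : (ℝ × ℝ) → ℝ := (Metric.closedBall (0 : ℝ × ℝ) R).indicator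
    (fun _ => 2 * C * ‖e‖) with hB
  have hBint : Integrable B := by
    rw [hB, integrable_indicator_iff measurableSet_closedBall]
    exact integrableOn_const (measure_closedBall_lt_top.ne)
  have hFbound : ∀ n : ℕ, ∀ᵐ x : ℝ × ℝ, ‖F n x‖ ≤ B x := by
    intro n
    filter_upwards with x
    rcases Nat.eq_zero_or_pos n with hn | hn
    · subst hn
      simp only [hF, Nat.cast_zero, zero_smul, norm_zero, hB]
      apply Set.indicator_nonneg
      intro a _
      positivity
    · have hn1 : (1:ℝ) ≤ (n:ℝ) := by exact_mod_cast hn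
      have hnpos : (0:ℝ) < (n:ℝ) := by linarith
      have hinv1 : ((n:ℝ))⁻¹ ≤ 1 := by
        rw [inv_le_one_iff₀]
        right; exact hn1
      have hvnorm : ‖((n:ℝ))⁻¹ • e‖ ≤ ‖e‖ := by
        rw [norm_smul, Real.norm_eq_abs, abs_of_pos (by positivity)]
        nlinarith [norm_nonneg e]
      by_cases hx : x ∈ Metric.closedBall (0 : ℝ × ℝ) R
      · have hxK : x ∈ K := by
          simp only [hK, Metric.mem_closedBall] at hx ⊢
          linarith [norm_nonneg e, hx]
        have hx2K : x + ((n:ℝ))⁻¹ • e ∈ K := by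
          simp only [hK, Metric.mem_closedBall, dist_zero_right] at hx ⊢
          calc ‖x + ((n:ℝ))⁻¹ • e‖ ≤ ‖x‖ + ‖((n:ℝ))⁻¹ • e‖ := norm_add_le _ _
            _ ≤ R + ‖e‖ := by
                have : ‖x‖ ≤ R := by simpa [dist_zero_right] using hx
                linarith
        have hBx : B x = 2 * C * ‖e‖ := Set.indicator_of_mem hx _
        rw [hBx, hF]
        simp only [norm_smul, Real.norm_natCast]
        calc (n:ℝ) * ‖E (x + ((n:ℝ))⁻¹ • e) - E x‖
            ≤ (n:ℝ) * ((2 * C) * ‖x + ((n:ℝ))⁻¹ • e - x‖) := by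
              have := hlip _ hx2K _ hxK
              nlinarith
          _ = (n:ℝ) * ((2 * C) * (((n:ℝ))⁻¹ * ‖e‖)) := by
              congr 2
              rw [add_sub_cancel_left, norm_smul, Real.norm_eq_abs, abs_of_pos (by positivity)]
          _ = 2 * C * ‖e‖ := by field_simp
      · have hBx : B x = 0 := Set.indicator_of_notMem hx _
        have hxnorm : R < ‖x‖ := by
          simp only [Metric.mem_closedBall, dist_zero_right, not_le] at hx
          exact hx
        have hxΩ : x ∉ Ω := fun h => by
          have := norm_le_one_of_mem_Icc (hbd h)
          have : (1:ℝ) < R := by rw [hR]; nlinarith [norm_nonneg e]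
          linarith [norm_le_one_of_mem_Icc (hbd h)]
        have hx2Ω : x + ((n:ℝ))⁻¹ • e ∉ Ω := fun h => by
          have h1 := norm_le_one_of_mem_Icc (hbd h)
          have h2 : ‖x‖ - ‖((n:ℝ))⁻¹ • e‖ ≤ ‖x + ((n:ℝ))⁻¹ • e‖ := by
            have := norm_add_le (x + ((n:ℝ))⁻¹ • e) (-(((n:ℝ))⁻¹ • e))
            simp only [add_neg_cancel_right, norm_neg] at this
            linarith
          rw [hR] at hxnorm
          nlinarith [norm_nonneg e, hvnorm]
        rw [hBx, hF]
        simp only [hE, Set.indicator_of_notMem hxΩ, Set.indicator_of_notMem hx2Ω,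
          sub_self, smul_zero, norm_zero, le_refl]
  -- pointwise convergence off the frontier
  have hfront : ∀ᵐ x : ℝ × ℝ, x ∉ frontier Ω := by
    rw [MeasureTheory.ae_iff]
    simpa using hnull
  have hinv : Filter.Tendsto (fun n : ℕ => ((n:ℝ))⁻¹) Filter.atTop (𝓝 0) :=
    tendsto_inv_atTop_nhds_zero_nat
  have hconv : ∀ᵐ x : ℝ × ℝ,
      Filter.Tendsto (fun n => F n x) Filter.atTop (𝓝 (f x)) := by
    filter_upwards [hfront] with x hx
    by_cases hxΩ : x ∈ Ω
    · -- interior case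
      have hfx : f x = fderiv ℝ u x e := Set.indicator_of_mem hxΩ _
      have hDer : HasDerivAt (fun t : ℝ => u (x + t • e)) (fderiv ℝ u x e) 0 := by
        have h1 : HasDerivAt (fun t : ℝ => x + t • e) e 0 := by
          simpa using ((hasDerivAt_id (0:ℝ)).smul_const e).const_add x
        have h2 : HasFDerivAt u (fderiv ℝ u x) (x + (0:ℝ) • e) := by
          simpa using ((hu.differentiable (by simp)).differentiableAt (x := x)).hasFDerivAt
        exact (h2.comp_hasDerivAt 0 h1)
      rw [hasDerivAt_iff_tendsto_slope] at hDer
      have hseq : Filter.Tendsto (fun n : ℕ => ((n:ℝ))⁻¹) Filter.atTop (𝓝[≠] 0) := by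
        apply tendsto_nhdsWithin_of_tendsto_nhds_of_eventually_within _ hinv
        filter_upwards [Filter.eventually_ge_atTop 1] with n hn
        have : (0:ℝ) < (n:ℝ) := by exact_mod_cast hn
        simp only [Set.mem_compl_iff, Set.mem_singleton_iff]
        positivity
      have hcomp := hDer.comp hseq
      have hnbhd : ∀ᶠ n : ℕ in Filter.atTop, x + ((n:ℝ))⁻¹ • e ∈ Ω := by
        have hcont : Filter.Tendsto (fun n : ℕ => x + ((n:ℝ))⁻¹ • e) Filter.atTop (𝓝 x) := by
          have := (hinv.smul_const e).const_add x
          simpa using this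
        exact hcont.eventually (hopen.eventually_mem hxΩ)
      rw [hfx]
      apply hcomp.congr'
      filter_upwards [hnbhd, Filter.eventually_ge_atTop 1] with n hn hn1
      have hnne : ((n:ℝ)) ≠ 0 := Nat.cast_ne_zero.mpr (by omega)
      show slope (fun t : ℝ => u (x + t • e)) 0 (((n:ℝ))⁻¹) = F n x
      rw [hF, slope]
      simp only [vsub_eq_sub, sub_zero, inv_inv, zero_smul, add_zero]
      rw [hE, Set.indicator_of_mem hn, Set.indicator_of_mem hxΩ]
    · -- exterior case
      have hxcl : x ∉ closure Ω := by
        intro hcl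
        have : x ∈ interior Ω ∪ frontier Ω := by
          rw [← closure_eq_interior_union_frontier]
          exact hcl
        rcases this with h | h
        · exact hxΩ (hopen.interior_eq ▸ h)
        · exact hx h
      have hfx : f x = 0 := Set.indicator_of_notMem hxΩ _
      have hcont : Filter.Tendsto (fun n : ℕ => x + ((n:ℝ))⁻¹ • e) Filter.atTop (𝓝 x) := by
        have := (hinv.smul_const e).const_add x
        simpa using this
      have hnbhd : ∀ᶠ n : ℕ in Filter.atTop, x + ((n:ℝ))⁻¹ • e ∈ (closure Ω)ᶜ :=
        hcont.eventually (isClosed_closure.isOpen_compl.eventually_mem hxcl)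
      rw [hfx]
      apply Filter.Tendsto.congr' _ tendsto_const_nhds
      filter_upwards [hnbhd] with n hn
      have h1 : x + ((n:ℝ))⁻¹ • e ∉ Ω := fun h => hn (subset_closure h)
      rw [hF]
      simp [hE, Set.indicator_of_notMem h1, Set.indicator_of_notMem hxΩ]
  -- dominated convergence
  have hFm : ∀ n : ℕ, AEStronglyMeasurable (F n) volume := by
    intro n
    refine (((hEsm.comp_measurable (measurable_id.add_const _)).sub hEsm).const_smul
      ((n:ℝ))).aestronglyMeasurable
  have hlim := MeasureTheory.tendsto_integral_of_dominated_convergence B hFm hBint hFbound hconv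
  have : Filter.Tendsto (fun n : ℕ => (0:ℂ)) Filter.atTop (𝓝 (∫ x, f x)) := by
    apply hlim.congr
    intro n
    exact hFzero n
  have hzero : ∫ x, f x = 0 := tendsto_nhds_unique this tendsto_const_nhds
  rw [hf] at hzero
  rw [← MeasureTheory.integral_indicator hmeas]
  exact hzero

lemma contDiff_fderiv_apply {f : ℝ × ℝ → ℂ} (hf : ContDiff ℝ (⊤ : ℕ∞) f) (e : ℝ × ℝ) :
    ContDiff ℝ (⊤ : ℕ∞) (fun s => fderiv ℝ f s e) :=
  (hf.fderiv_right (by simp)).clm_apply contDiff_const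

lemma fderiv_fderiv_apply {f : ℝ × ℝ → ℂ} (hf : ContDiff ℝ (⊤ : ℕ∞) f) (r v w : ℝ × ℝ) :
    fderiv ℝ (fun s => fderiv ℝ f s w) r v = fderiv ℝ (fderiv ℝ f) r v w := by
  have h1 : DifferentiableAt ℝ (fderiv ℝ f) r :=
    ((hf.fderiv_right (m := (⊤ : ℕ∞)) (by simp)).differentiable (by simp)).differentiableAt
  have h2 := (h1.hasFDerivAt.clm_apply (hasFDerivAt_const w r)).fderiv
  rw [h2]
  simp

lemma fderiv_mul_apply {c d : ℝ × ℝ → ℂ} {r : ℝ × ℝ} (hc : DifferentiableAt ℝ c r)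
    (hd : DifferentiableAt ℝ d r) (e : ℝ × ℝ) :
    fderiv ℝ (fun s => c s * d s) r e = c r * fderiv ℝ d r e + d r * fderiv ℝ c r e := by
  rw [fderiv_fun_mul hc hd]
  simp [smul_eq_mul]

theorem part1_main
    (Ω : Set (ℝ × ℝ)) (hΩo : IsOpen Ω) (hΩb : Ω ⊆ Set.Icc ((0:ℝ), (0:ℝ)) (1, 1))
    (g : ℝ × ℝ → ℂ) (hg : ContDiff ℝ (⊤ : ℕ∞) g)
    (e₁ e₂ : ℝ × ℝ)
    (hDg : ∀ r ∈ Ω, fderiv ℝ (fun s => fderiv ℝ g s e₁) r e₂ = 0)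
    (μ : AddMonoidAlgebra ℂ (ℤ × ℤ)) (hμ0 : μ ≠ 0)
    (hμ : ∀ r ∈ frontier Ω, trigEval μ r = 0)
    (φ : ℝ × ℝ → ℂ) (hφ : ContDiff ℝ (⊤ : ℕ∞) φ) :
    ∫ r in Ω, g r *
        fderiv ℝ (fun s => fderiv ℝ (fun u => trigEval (μ ^ 2) u * φ u) s e₁) r e₂ = 0 := by
  have hmeas : MeasurableSet Ω := hΩo.measurableSet
  have hnull : volume (frontier Ω) = 0 :=
    measure_mono_null (fun r hr => by exact (hμ r hr : trigEval μ r = 0)) (null_zero_set μ hμ0)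
  have hcd_q : ContDiff ℝ (⊤ : ℕ∞) (trigEval (μ ^ 2)) := contDiff_trigEval _
  have hcd_p : ContDiff ℝ (⊤ : ℕ∞) (trigEval μ) := contDiff_trigEval μ
  set h : ℝ × ℝ → ℂ := fun u => trigEval (μ ^ 2) u * φ u with hh_def
  have hh : ContDiff ℝ (⊤ : ℕ∞) h := hcd_q.mul hφ
  have hq0 : ∀ r ∈ frontier Ω, trigEval (μ ^ 2) r = 0 := by
    intro r hr
    rw [trigEval_sq, hμ r hr]
    ring
  have hdq0 : ∀ r ∈ frontier Ω, fderiv ℝ (trigEval (μ ^ 2)) r = 0 := by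
    intro r hr
    have hqpp : trigEval (μ ^ 2) = fun s => trigEval μ s * trigEval μ s :=
      funext fun s => by rw [trigEval_sq]; ring
    rw [hqpp, fderiv_fun_mul ((hcd_p.differentiable (by simp)).differentiableAt)
      ((hcd_p.differentiable (by simp)).differentiableAt), hμ r hr]
    ext v <;> simp
  set u₁ : ℝ × ℝ → ℂ := fun s => g s * fderiv ℝ h s e₁ with hu₁_def
  set u₂ : ℝ × ℝ → ℂ := fun s => fderiv ℝ g s e₂ * h s with hu₂_def
  have hu₁cd : ContDiff ℝ (⊤ : ℕ∞) u₁ := hg.mul (contDiff_fderiv_apply hh e₁)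
  have hu₂cd : ContDiff ℝ (⊤ : ℕ∞) u₂ := (contDiff_fderiv_apply hg e₂).mul hh
  have hvan₁ : ∀ r ∈ frontier Ω, u₁ r = 0 := by
    intro r hr
    have : fderiv ℝ h r e₁ = 0 := by
      rw [hh_def]
      rw [fderiv_mul_apply ((hcd_q.differentiable (by simp)).differentiableAt)
        ((hφ.differentiable (by simp)).differentiableAt), hq0 r hr, hdq0 r hr]
      simp
    rw [hu₁_def]
    simp [this]
  have hvan₂ : ∀ r ∈ frontier Ω, u₂ r = 0 := by
    intro r hr
    rw [hu₂_def]
    simp only [hh_def]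
    rw [hq0 r hr]
    simp
  -- the pointwise identity on Ω
  have hEq : Set.EqOn
      (fun r => g r * fderiv ℝ (fun s => fderiv ℝ (fun u => trigEval (μ ^ 2) u * φ u) s e₁) r e₂)
      (fun r => fderiv ℝ u₁ r e₂ - fderiv ℝ u₂ r e₁) Ω := by
    intro r hr
    have hD1h : DifferentiableAt ℝ (fun s => fderiv ℝ h s e₁) r :=
      ((contDiff_fderiv_apply hh e₁).differentiable (by simp)).differentiableAt
    have hD2g : DifferentiableAt ℝ (fun s => fderiv ℝ g s e₂) r :=
      ((contDiff_fderiv_apply hg e₂).differentiable (by simp)).differentiableAt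
    have hgd : DifferentiableAt ℝ g r := (hg.differentiable (by simp)).differentiableAt
    have hhd : DifferentiableAt ℝ h r := (hh.differentiable (by simp)).differentiableAt
    have e1 : fderiv ℝ u₁ r e₂ =
        g r * fderiv ℝ (fun s => fderiv ℝ h s e₁) r e₂ + fderiv ℝ h r e₁ * fderiv ℝ g r e₂ := by
      rw [hu₁_def]
      exact fderiv_mul_apply hgd hD1h e₂
    have e2 : fderiv ℝ u₂ r e₁ =
        fderiv ℝ g r e₂ * fderiv ℝ h r e₁ + h r * fderiv ℝ (fun s => fderiv ℝ g s e₂) r e₁ := by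
      rw [hu₂_def]
      exact fderiv_mul_apply hD2g hhd e₁
    have hsymm : fderiv ℝ (fun s => fderiv ℝ g s e₂) r e₁ = 0 := by
      rw [fderiv_fderiv_apply hg r e₁ e₂]
      have hsym := (hg.contDiffAt (x := r)).isSymmSndFDerivAt (n := (⊤ : ℕ∞)) (by rw [minSmoothness_of_isRCLikeNormedField]; exact WithTop.coe_le_coe.mpr le_top)
      rw [← hsym.eq e₂ e₁]
      rw [← fderiv_fderiv_apply hg r e₂ e₁]
      exact hDg r hr
    simp only
    rw [e1, e2, hsymm]
    simp only [hh_def]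
    ring
  rw [MeasureTheory.setIntegral_congr_fun hmeas hEq]
  have hint1 : IntegrableOn (fun r => fderiv ℝ u₁ r e₂) Ω := by
    refine (((contDiff_fderiv_apply hu₁cd e₂).continuous.continuousOn.integrableOn_compact
      isCompact_Icc).mono_set hΩb)
  have hint2 : IntegrableOn (fun r => fderiv ℝ u₂ r e₁) Ω := by
    refine (((contDiff_fderiv_apply hu₂cd e₁).continuous.continuousOn.integrableOn_compact
      isCompact_Icc).mono_set hΩb)
  rw [MeasureTheory.integral_sub hint1 hint2]
  rw [key_div Ω hΩo hΩb hnull u₁ hu₁cd hvan₁ e₂, key_div Ω hΩo hΩb hnull u₂ hu₂cd hvan₂ e₁]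
  ring

lemma expLin_mul (a b a' b' : ℂ) (r : ℝ × ℝ) :
    expLin a b r * expLin a' b' r = expLin (a + a') (b + b') r := by
  unfold expLin
  rw [← Complex.exp_add]
  congr 1
  ring

lemma fderiv_const_mul_expLin (c a b : ℂ) (r e : ℝ × ℝ) :
    fderiv ℝ (fun u => c * expLin a b u) r e = (c * (a * e.1 + b * e.2)) * expLin a b r := by
  rw [fderiv_const_mul (((contDiff_expLin a b).differentiable (by simp)).differentiableAt) c]
  have : (c • fderiv ℝ (expLin a b) r) e = c * (fderiv ℝ (expLin a b) r e) := by simp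
  rw [this, fderiv_expLin_apply]
  ring

lemma fderiv_sum_expLin_apply {ι : Type*} (S : Finset ι) (c A B : ι → ℂ) (r e : ℝ × ℝ) :
    fderiv ℝ (fun u => ∑ k ∈ S, c k * expLin (A k) (B k) u) r e
      = ∑ k ∈ S, (c k * (A k * e.1 + B k * e.2)) * expLin (A k) (B k) r := by
  rw [fderiv_fun_sum (fun k _ =>
    ((contDiff_const.mul (contDiff_expLin (A k) (B k))).differentiable (by simp)).differentiableAt)]
  rw [ContinuousLinearMap.sum_apply]
  exact Finset.sum_congr rfl fun k _ => by rw [fderiv_const_mul_expLin]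

lemma d2_sum_expLin {ι : Type*} (S : Finset ι) (c A B : ι → ℂ) (r e₁ e₂ : ℝ × ℝ) :
    fderiv ℝ (fun s => fderiv ℝ (fun u => ∑ k ∈ S, c k * expLin (A k) (B k) u) s e₁) r e₂
      = ∑ k ∈ S, (c k * ((A k * e₁.1 + B k * e₁.2) * (A k * e₂.1 + B k * e₂.2)))
          * expLin (A k) (B k) r := by
  have h1 : (fun s => fderiv ℝ (fun u => ∑ k ∈ S, c k * expLin (A k) (B k) u) s e₁)
      = fun s => ∑ k ∈ S, (c k * (A k * e₁.1 + B k * e₁.2)) * expLin (A k) (B k) s :=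
    funext fun s => fderiv_sum_expLin_apply S c A B s e₁
  rw [h1, fderiv_sum_expLin_apply]
  exact Finset.sum_congr rfl fun k _ => by ring

theorem part2_main
    (Ω : Set (ℝ × ℝ)) (hΩo : IsOpen Ω) (hΩb : Ω ⊆ Set.Icc ((0:ℝ), (0:ℝ)) (1, 1))
    (g : ℝ × ℝ → ℂ) (hg : ContDiff ℝ (⊤ : ℕ∞) g)
    (e₁ e₂ : ℝ × ℝ)
    (hDg : ∀ r ∈ Ω, fderiv ℝ (fun s => fderiv ℝ g s e₁) r e₂ = 0)
    (μ : AddMonoidAlgebra ℂ (ℤ × ℤ)) (hμ0 : μ ≠ 0)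
    (hμ : ∀ r ∈ frontier Ω, trigEval μ r = 0) (ω : ℝ × ℝ) :
    ∑ k ∈ (μ ^ 2).coeff.support, (μ ^ 2).coeff k *
        hatD2f e₁ e₂ g Ω (ω.1 - 2 * Real.pi * k.1, ω.2 - 2 * Real.pi * k.2) = 0 := by
  set S := (μ ^ 2).coeff.support with hS
  set A : ℤ × ℤ → ℂ := fun k => 2 * Real.pi * Complex.I * k.1 + -Complex.I * ω.1 with hA
  set B : ℤ × ℤ → ℂ := fun k => 2 * Real.pi * Complex.I * k.2 + -Complex.I * ω.2 with hB
  have hφ : ContDiff ℝ (⊤ : ℕ∞) (expLin (-Complex.I * ω.1) (-Complex.I * ω.2)) := contDiff_expLin _ _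
  have hP1 := part1_main Ω hΩo hΩb g hg e₁ e₂ hDg μ hμ0 hμ _ hφ
  have hfun : (fun u => trigEval (μ ^ 2) u * expLin (-Complex.I * ω.1) (-Complex.I * ω.2) u)
      = fun u => ∑ k ∈ S, (μ ^ 2).coeff k * expLin (A k) (B k) u := by
    funext u
    rw [trigEval_eq, Finset.sum_mul]
    exact Finset.sum_congr rfl fun k _ => by rw [mul_assoc, expLin_mul]
  rw [hfun] at hP1
  have hfd : ∀ r : ℝ × ℝ,
      g r * fderiv ℝ (fun s => fderiv ℝ (fun u => ∑ k ∈ S, (μ ^ 2).coeff k * expLin (A k) (B k) u) s e₁)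
          r e₂
        = ∑ k ∈ S, ((μ ^ 2).coeff k * ((A k * e₁.1 + B k * e₁.2) * (A k * e₂.1 + B k * e₂.2)))
            * (g r * expLin (A k) (B k) r) := by
    intro r
    rw [d2_sum_expLin, Finset.mul_sum]
    exact Finset.sum_congr rfl fun k _ => by ring
  rw [MeasureTheory.setIntegral_congr_fun hΩo.measurableSet (fun r _ => hfd r)] at hP1
  rw [MeasureTheory.integral_finset_sum _ (fun k _ => by
    refine ((Continuous.continuousOn ?_).integrableOn_compact isCompact_Icc).mono_set hΩb
    exact continuous_const.mul (hg.continuous.mul (contDiff_expLin (A k) (B k)).continuous))] at hP1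
  simp only [MeasureTheory.integral_const_mul] at hP1
  -- now rewrite the goal to match hP1
  rw [← hP1]
  refine Finset.sum_congr rfl fun k hk => ?_
  unfold hatD2f
  have hintg : ∫ r in Ω, g r * Complex.exp (-Complex.I *
        ((ω.1 - 2 * Real.pi * k.1, ω.2 - 2 * Real.pi * k.2).1 * r.1 +
         (ω.1 - 2 * Real.pi * k.1, ω.2 - 2 * Real.pi * k.2).2 * r.2))
      = ∫ r in Ω, g r * expLin (A k) (B k) r := by
    refine MeasureTheory.setIntegral_congr_fun hΩo.measurableSet (fun r _ => ?_)
    unfold expLin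
    congr 1
    rw [hA, hB]
    push_cast
    ring
  rw [hintg]
  have hpre1 : (-Complex.I * ((ω.1 - 2 * Real.pi * k.1, ω.2 - 2 * Real.pi * k.2).1 * e₁.1 +
      (ω.1 - 2 * Real.pi * k.1, ω.2 - 2 * Real.pi * k.2).2 * e₁.2) : ℂ)
      = A k * e₁.1 + B k * e₁.2 := by
    rw [hA, hB]; push_cast; ring
  have hpre2 : (-Complex.I * ((ω.1 - 2 * Real.pi * k.1, ω.2 - 2 * Real.pi * k.2).1 * e₂.1 +
      (ω.1 - 2 * Real.pi * k.1, ω.2 - 2 * Real.pi * k.2).2 * e₂.2) : ℂ)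
      = A k * e₂.1 + B k * e₂.2 := by
    rw [hA, hB]; push_cast; ring
  rw [hpre1, hpre2]
  ring

/-- **Annihilation for piecewise smooth pieces, second order.**
Let `D = ∂₂∂₁` with `∂₁, ∂₂ ∈ {∂ₓ, ∂_y}`, let `f = g·χ_Ω` with `g` smooth and `Dg = 0`
on `Ω`, and let the trigonometric polynomial `μ` vanish on `∂Ω`. Then `μ²·Df = 0` as
distributions (`⟨Df, μ²φ⟩ = ∫_Ω g·∂₁∂₂(μ²φ) = 0` for all smooth test `φ`), so the
Fourier coefficients `d[k] = (μ²) k`, `k ∈ Γ = (μ²).support`, annihilate `(Df)^`: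
`∑_{k∈Γ} d[k] (Df)^(ω − 2πk) = 0` for all `ω ∈ ℝ²`. -/
theorem annihilation_second_order_piecewise
    (Ω : Set (ℝ × ℝ)) (hΩ : IsPSRegion Ω)
    (g : ℝ × ℝ → ℂ) (hg : ContDiff ℝ (⊤ : ℕ∞) g)
    (e₁ e₂ : ℝ × ℝ)
    (he₁ : e₁ = ((1:ℝ), (0:ℝ)) ∨ e₁ = ((0:ℝ), (1:ℝ)))
    (he₂ : e₂ = ((1:ℝ), (0:ℝ)) ∨ e₂ = ((0:ℝ), (1:ℝ)))
    (hDg : ∀ r ∈ Ω, fderiv ℝ (fun s => fderiv ℝ g s e₁) r e₂ = 0)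
    (μ : AddMonoidAlgebra ℂ (ℤ × ℤ))
    (hμ : ∀ r ∈ frontier Ω, trigEval μ r = 0) :
    (∀ φ : ℝ × ℝ → ℂ, ContDiff ℝ (⊤ : ℕ∞) φ →
      ∫ r in Ω, g r *
        fderiv ℝ (fun s => fderiv ℝ (fun u => trigEval (μ ^ 2) u * φ u) s e₁) r e₂
          = 0) ∧
    (∀ ω : ℝ × ℝ,
      ∑ k ∈ (μ ^ 2).coeff.support, (μ ^ 2).coeff k *
        hatD2f e₁ e₂ g Ω (ω.1 - 2 * Real.pi * k.1, ω.2 - 2 * Real.pi * k.2) = 0) := by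
  obtain ⟨hΩo, hΩb, -, -⟩ := hΩ
  rcases eq_or_ne μ 0 with rfl | hμ0
  · constructor
    · intro φ hφ
      have hz : (fun u => trigEval ((0 : AddMonoidAlgebra ℂ (ℤ × ℤ)) ^ 2) u * φ u)
          = fun _ => (0:ℂ) := funext fun u => by simp [trigEval_sq, trigEval]
      rw [hz]
      have h1 : (fun s : ℝ × ℝ => fderiv ℝ (fun _ : ℝ × ℝ => (0:ℂ)) s e₁)
          = fun _ => (0:ℂ) := by
        funext s
        simp [fderiv_const]
      rw [h1]
      simp [fderiv_const]
    · intro ω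
      have h2 : ((0 : AddMonoidAlgebra ℂ (ℤ × ℤ)) ^ 2) = 0 := by
        rw [sq, mul_zero]
      rw [h2]
      simp
  · exact ⟨fun φ hφ => part1_main Ω hΩo hΩb g hg e₁ e₂ hDg μ hμ0 hμ φ hφ,
      fun ω => part2_main Ω hΩo hΩb g hg e₁ e₂ hDg μ hμ0 hμ ω⟩
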